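/- Let φ be an s-model of a finite tree T with maximum degree at most 4, let v be a vertex of T of degree at least 2, and let b_φ(v) denote the maximum of b_φ(Q) over all leaf-to-leaf paths Q of T containing v. If v is balanced in φ, then b_φ(v) = max{b^1 + b^2, b^1 + b^3 + 1}, where b^1 ≥ b^2 ≥ b^3 are the three largest values among b^ℓ_φ(v,u) over the neighbors u of v (with the convention b^i = −1 when v has fewer than i neighbors). -/

import Mathlib

open SimpleGraph

/-- The closed axis-parallel grid segment (bounding box) with corners `p` and `q`.
For axis-aligned `p`, `q` this is exactly the straight segment joining them. -/
def seg (p q : ℤ × ℤ) : Set (ℤ × ℤ) :=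
  {r | r.1 ∈ Set.uIcc p.1 q.1 ∧ r.2 ∈ Set.uIcc p.2 q.2}

/-- A straight model (s-model) of a graph `G`: an injective drawing of the vertices on the
grid `ℤ × ℤ` such that every edge is a horizontal or vertical straight segment, and segments
of distinct edges meet only at the image of a common endpoint. -/
structure SModel {V : Type*} (G : SimpleGraph V) where
  toFun : V → ℤ × ℤ
  inj : Function.Injective toFun
  axisAligned : ∀ ⦃u v : V⦄, G.Adj u v →
    ((toFun u).1 = (toFun v).1 ∧ (toFun u).2 ≠ (toFun v).2) ∨
    ((toFun u).2 = (toFun v).2 ∧ (toFun u).1 ≠ (toFun v).1)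
  noCross : ∀ ⦃u v x y : V⦄, G.Adj u v → G.Adj x y → s(u, v) ≠ s(x, y) →
    ∀ r ∈ seg (toFun u) (toFun v) ∩ seg (toFun x) (toFun y),
      ∃ w : V, (w = u ∨ w = v) ∧ (w = x ∨ w = y) ∧ toFun w = r

/-- The drawing `φ` bends at `b` when passing `a, b, c`: one of the two segments is
vertical and the other horizontal. -/
def bendAt {V : Type*} (φ : V → ℤ × ℤ) (a b c : V) : Prop :=
  ((φ a).1 = (φ b).1 ∧ (φ b).2 = (φ c).2) ∨
  ((φ a).2 = (φ b).2 ∧ (φ b).1 = (φ c).1)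

instance {V : Type*} (φ : V → ℤ × ℤ) (a b c : V) : Decidable (bendAt φ a b c) := by
  unfold bendAt; infer_instance

/-- The list of internal vertices, in order, at which the drawing of the given vertex list
bends. -/
def bendVertices {V : Type*} (φ : V → ℤ × ℤ) : List V → List V
  | a :: b :: c :: rest =>
      (if bendAt φ a b c then [b] else []) ++ bendVertices φ (b :: c :: rest)
  | _ => []

/-- The number of bends of (the drawing of) a vertex list. -/
def bends {V : Type*} (φ : V → ℤ × ℤ) (L : List V) : ℕ :=
  (bendVertices φ L).length

section Defs

variable {V : Type*} [Fintype V]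

/-- `b(φ)`: the maximum number of bends over all leaf-to-leaf paths (0 if there are none). -/
noncomputable def bendNum {G : SimpleGraph V} [DecidableRel G.Adj] (M : SModel G) : ℕ :=
  sSup {n | ∃ (a b : V) (W : G.Walk a b), W.IsPath ∧ G.degree a = 1 ∧ G.degree b = 1 ∧
    bends M.toFun W.support = n}

/-- `b(T)`: the minimum of `b(φ)` over all s-models `φ`. -/
noncomputable def treeBendNum (G : SimpleGraph V) [DecidableRel G.Adj] : ℕ :=
  sInf {n | ∃ M : SModel G, bendNum M = n}

/-- `b^ℓ_φ(p, v)`: the maximum number of bends over all paths from `p` to a leaf that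
contain `v`. -/
noncomputable def leafBend {G : SimpleGraph V} [DecidableRel G.Adj] (M : SModel G)
    (p v : V) : ℕ :=
  sSup {n | ∃ (f : V) (W : G.Walk p f), W.IsPath ∧ G.degree f = 1 ∧ v ∈ W.support ∧
    bends M.toFun W.support = n}

/-- `b^ℓ_T(p, v)`: the minimum of `b^ℓ_φ(p, v)` over all s-models `φ`. -/
noncomputable def leafBendMin (G : SimpleGraph V) [DecidableRel G.Adj] (p v : V) : ℕ :=
  sInf {n | ∃ M : SModel G, leafBend M p v = n}

/-- `b_φ(v)`: the maximum number of bends over all leaf-to-leaf paths containing `v`. -/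
noncomputable def bendNumAt {G : SimpleGraph V} [DecidableRel G.Adj] (M : SModel G)
    (v : V) : ℕ :=
  sSup {n | ∃ (a b : V) (W : G.Walk a b), W.IsPath ∧ G.degree a = 1 ∧ G.degree b = 1 ∧
    v ∈ W.support ∧ bends M.toFun W.support = n}

/-- `p`, `q`, `r` lie on a common horizontal or vertical grid line. -/
def collinearGrid (p q r : ℤ × ℤ) : Prop :=
  (p.1 = q.1 ∧ q.1 = r.1) ∨ (p.2 = q.2 ∧ q.2 = r.2)

/-- `v` is balanced in the s-model `M`: either it has degree at most 1, or two neighbors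
realizing the two largest values of `b^ℓ_M(v, ·)` are drawn collinearly with `v`. -/
def BalancedAt {G : SimpleGraph V} [DecidableRel G.Adj] (M : SModel G) (v : V) : Prop :=
  G.degree v ≤ 1 ∨
  ∃ u1 u2 : V, u1 ≠ u2 ∧ G.Adj v u1 ∧ G.Adj v u2 ∧
    collinearGrid (M.toFun u1) (M.toFun v) (M.toFun u2) ∧
    ∀ w : V, G.Adj v w → w ≠ u1 → w ≠ u2 →
      leafBend M v w ≤ min (leafBend M v u1) (leafBend M v u2)

/-- The value `b^ℓ_M(v, u)` of a real or virtual (`none`) neighbor `u` of `v`; virtual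
neighbors have value `-1`. -/
noncomputable def optVal {G : SimpleGraph V} [DecidableRel G.Adj] (M : SModel G) (v : V) :
    Option V → ℤ
  | none => -1
  | some u => (leafBend M v u : ℤ)

/-- `u1` and `u2` are the first two entries of a nonincreasing (w.r.t. `b^ℓ_M(v, ·)`)
ordering of the real neighbors of `v` other than `p`, padded at the end with virtual
neighbors `none`. -/
def TopTwo {G : SimpleGraph V} [DecidableRel G.Adj] (M : SModel G) (p v : V) :
    Option V → Option V → Prop
  | none, u2 => u2 = none ∧ ∀ w, G.Adj v w → w = p
  | some a, none => G.Adj v a ∧ a ≠ p ∧ ∀ w, G.Adj v w → w ≠ p → w = a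
  | some a, some b => G.Adj v a ∧ a ≠ p ∧ G.Adj v b ∧ b ≠ p ∧ a ≠ b ∧
      leafBend M v b ≤ leafBend M v a ∧
      ∀ w, G.Adj v w → w ≠ p → w ≠ a → w ≠ b → leafBend M v w ≤ leafBend M v b

/-- Criticality of an ordered pair in an s-model `M`: every pair `(p, ∅)` is critical, and an
ordered edge `(p, v)` is critical if, for the first two entries `u1, u2` of some nonincreasing
ordering of the other neighbors of `v`, either `b^ℓ_M(p,v) = b^1` and `(v, u1)` is critical, or
`b^ℓ_M(p,v) = b^2 + 1` and both `(v, u1)` and `(v, u2)` are critical. -/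
inductive Critical {G : SimpleGraph V} [DecidableRel G.Adj] (M : SModel G) :
    V → Option V → Prop
  | base (p : V) : Critical M p none
  | top1 (p v : V) (u1 u2 : Option V) (hadj : G.Adj p v)
      (htop : TopTwo M p v u1 u2)
      (hb : (leafBend M p v : ℤ) = optVal M v u1)
      (hc : Critical M v u1) : Critical M p (some v)
  | top2 (p v : V) (u1 u2 : Option V) (hadj : G.Adj p v)
      (htop : TopTwo M p v u1 u2)
      (hb : (leafBend M p v : ℤ) = optVal M v u2 + 1)
      (hc1 : Critical M v u1) (hc2 : Critical M v u2) : Critical M p (some v)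

end Defs

/-- Membership in the class of trees of the statement: a tree with maximum degree at most 4
having a vertex `r` of degree exactly 2 with distinct neighbors `r1`, `r2`, admitting a
balanced s-model `M` with `b^ℓ_M(r,r1) = b^ℓ_M(r,r2) = k - 1`. -/
def ClassProp (k : ℕ) (V : Type) [Fintype V] (G : SimpleGraph V)
    [DecidableRel G.Adj] : Prop :=
  G.IsTree ∧ (∀ v, G.degree v ≤ 4) ∧
  ∃ (r r1 r2 : V) (M : SModel G),
    G.degree r = 2 ∧ G.Adj r r1 ∧ G.Adj r r2 ∧ r1 ≠ r2 ∧
    (∀ v, BalancedAt M v) ∧ leafBend M r r1 = k - 1 ∧ leafBend M r r2 = k - 1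

/-- The full binary tree of height `k`, with vertex set the lists over `Bool` of length at
most `k`, rooted at the empty list; children of `l` are the lists `c :: l`. -/
def fullBinTree (k : ℕ) : SimpleGraph {l : List Bool // l.length ≤ k} :=
  SimpleGraph.fromRel (fun a b => ∃ c : Bool, (b : List Bool) = c :: (a : List Bool))

/-- A tree with maximum degree at most 4 and minimum bend number `k`. -/
def TreeProp (k : ℕ) (V : Type) [Fintype V] (G : SimpleGraph V)
    [DecidableRel G.Adj] : Prop :=
  G.IsTree ∧ (∀ v, G.degree v ≤ 4) ∧ treeBendNum G = k

/-- The grid graph on `ℤ × ℤ`: two grid points are adjacent iff their distance is 1. -/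
def gridGraph : SimpleGraph (ℤ × ℤ) :=
  SimpleGraph.fromRel (fun p q =>
    (p.1 = q.1 ∧ (p.2 - q.2).natAbs = 1) ∨ (p.2 = q.2 ∧ (p.1 - q.1).natAbs = 1))

/-- `G` is a `B_k`-EPG graph: it has an EPG model by grid paths each with at most `k` bends;
distinct vertices are adjacent iff the corresponding grid paths share a grid edge. -/
def IsBkEPG {X : Type*} (G : SimpleGraph X) (k : ℕ) : Prop :=
  ∃ (s t : X → ℤ × ℤ) (P : ∀ x : X, gridGraph.Walk (s x) (t x)),
    (∀ x, (P x).IsPath) ∧ (∀ x, bends (id : ℤ × ℤ → ℤ × ℤ) (P x).support ≤ k) ∧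
    ∀ x y : X, x ≠ y → (G.Adj x y ↔ ∃ e, e ∈ (P x).edges ∧ e ∈ (P y).edges)

/-- `⟨T, (Q x)_{x}⟩` is a VPT model of `G`: the `Q x` are pairwise distinct paths of the host
tree `T`, and distinct vertices of `G` are adjacent iff their paths share a vertex of `T`. -/
def IsVPTModel {X W : Type*} (G : SimpleGraph X) (T : SimpleGraph W)
    (s t : X → W) (Q : ∀ x : X, T.Walk (s x) (t x)) : Prop :=
  (∀ x, (Q x).IsPath) ∧
  (∀ x y : X, x ≠ y → {w : W | w ∈ (Q x).support} ≠ {w : W | w ∈ (Q y).support}) ∧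
  (∀ x y : X, x ≠ y → (G.Adj x y ↔ ∃ w : W, w ∈ (Q x).support ∧ w ∈ (Q y).support))

/-- A host tree with maximum degree at most 3 and minimum bend number `k`. -/
def HostProp (k : ℕ) (W : Type) [Fintype W] (T : SimpleGraph W)
    [DecidableRel T.Adj] : Prop :=
  T.IsTree ∧ (∀ v, T.degree v ≤ 3) ∧ treeBendNum T = k

/-!
A leaf-to-leaf path through `v` leaves `v` through two distinct neighbours `x`, `y`, and in a
tree its two halves can be chosen independently; so `b_φ(v)` is the maximum over such pairs of
`b^ℓ(v,x) + b^ℓ(v,y)`, plus one if the drawing bends at `v`. As `v` is balanced, a top pair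
`a, b` is drawn straight through `v`, and no third neighbour lies on that line (the edge
segments would overlap). Hence a straight pair contributes at most `b^1 + b^2`, attained by
`a, b`, while a bending pair uses a neighbour outside `{a, b}` and contributes at most
`b^1 + b^3 + 1`, attained by joining the larger of `a, b` to a third neighbour.
-/

section Bends

variable {V : Type*} (φ : V → ℤ × ℤ)

lemma bendAt_comm {a b c : V} : bendAt φ a b c ↔ bendAt φ c b a := by
  unfold bendAt; tauto

lemma bends_cons_cons_cons (a b c : V) (L : List V) :
    bends φ (a :: b :: c :: L) = (if bendAt φ a b c then 1 else 0) + bends φ (b :: c :: L) := by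
  simp only [bends, bendVertices]
  split_ifs <;> simp [add_comm]

lemma bends_le_length : ∀ L : List V, bends φ L ≤ L.length
  | [] | [_] | [_, _] => by simp [bends, bendVertices]
  | a :: b :: c :: L => by
    have := bends_le_length (b :: c :: L)
    rw [bends_cons_cons_cons]
    split_ifs <;> simp only [List.length_cons] at * <;> omega

lemma bends_append_cons_cons (L : List V) (a b : V) (L' : List V) :
    bends φ (L ++ a :: b :: L') = bends φ (L ++ [a, b]) + bends φ (a :: b :: L') := by
  induction L with
  | nil => simp [bends, bendVertices]
  | cons c L ih =>
    rcases L with _ | ⟨d, _ | ⟨e, L⟩⟩ <;>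
      simp only [List.cons_append, List.nil_append, bends_cons_cons_cons] at ih ⊢
    · simp [bends, bendVertices]
    · omega
    · omega

lemma bends_reverse : ∀ L : List V, bends φ L.reverse = bends φ L
  | [] | [_] | [_, _] => rfl
  | a :: b :: c :: L => by
    have key := bends_append_cons_cons φ L.reverse c b [a]
    have hrev : (b :: c :: L).reverse = L.reverse ++ [c, b] := by simp
    simp only [List.reverse_cons, List.append_assoc, List.cons_append, List.nil_append] at key ⊢
    rw [key, ← hrev, bends_reverse (b :: c :: L), bends_cons_cons_cons, bends_cons_cons_cons]
    simp [bends, bendVertices, bendAt_comm φ (a := c), add_comm]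

end Bends

lemma bends_support_reverse_append {V : Type*} {G : SimpleGraph V} (φ : V → ℤ × ℤ)
    {v a b : V} (p : G.Walk v a) (q : G.Walk v b) (hp : ¬ p.Nil) (hq : ¬ q.Nil) :
    bends φ (p.reverse.append q).support =
      bends φ p.support + bends φ q.support + if bendAt φ p.snd v q.snd then 1 else 0 := by
  cases p with
  | nil => exact absurd Walk.Nil.nil hp
  | @cons _ x _ hx p =>
  cases q with
  | nil => exact absurd Walk.Nil.nil hq
  | @cons _ y _ hy q =>
  simp only [Walk.support_append, Walk.support_reverse, Walk.support_cons, List.tail_cons,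
    Walk.snd_cons]
  rw [← p.cons_tail_support, ← q.cons_tail_support]
  generalize p.support.tail = L; generalize q.support.tail = L'
  have hsplit : (v :: x :: L).reverse ++ y :: L' = L.reverse ++ x :: v :: y :: L' := by simp
  rw [hsplit, bends_append_cons_cons, bends_cons_cons_cons,
    show L.reverse ++ [x, v] = (v :: x :: L).reverse by simp, bends_reverse]
  omega

namespace SimpleGraph.IsAcyclic

variable {V : Type*} {G : SimpleGraph V}

lemma isPath_reverse_append (hG : G.IsAcyclic) {v a b : V} {p : G.Walk v a}
    {q : G.Walk v b} (hp : p.IsPath) (hq : q.IsPath) (hpq : p.snd ≠ q.snd) :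
    (p.reverse.append q).IsPath := by
  classical
  have hq' := hq.support_nodup
  rw [← q.cons_tail_support, List.nodup_cons] at hq'
  rw [Walk.isPath_def, Walk.support_append, Walk.support_reverse, List.nodup_append]
  refine ⟨List.nodup_reverse.mpr hp.support_nodup, hq'.2, ?_⟩
  rintro w hwp _ hwq rfl
  have hwv : w ≠ v := by rintro rfl; exact hq'.1 hwq
  rw [List.mem_reverse] at hwp
  have hwq' : w ∈ q.support := List.mem_of_mem_tail hwq
  apply hpq
  rw [← p.snd_takeUntil hwv hwp, ← q.snd_takeUntil hwv hwq']
  exact congrArg (fun r : G.Path v w => r.1.snd)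
    ((hG.subsingleton_path v w).elim ⟨_, hp.takeUntil hwp⟩ ⟨_, hq.takeUntil hwq'⟩)

/-- Take a longest path from `v` through `u`: every neighbour of its end lies on it, hence
(by acyclicity) is its penultimate vertex. -/
lemma exists_isPath_snd_eq_degree_eq_one [Fintype V] [DecidableRel G.Adj] (hG : G.IsAcyclic)
    {v u : V} (h : G.Adj v u) :
    ∃ (f : V) (p : G.Walk v f), p.IsPath ∧ G.degree f = 1 ∧ p.snd = u := by
  classical
  let S := {n | ∃ (f : V) (p : G.Walk v f), p.IsPath ∧ u ∈ p.support ∧ p.length = n}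
  have hS : S.Nonempty := ⟨1, u, .cons h .nil, by simp [h.ne], by simp, rfl⟩
  have hbdd : BddAbove S := ⟨Fintype.card V, by rintro _ ⟨f, p, hp, -, rfl⟩; exact hp.length_lt.le⟩
  obtain ⟨f, p, hp, hup, hlen⟩ := Nat.sSup_mem hS hbdd
  have hnil : ¬ p.Nil := by
    intro hn
    rw [Walk.nil_iff_support_eq.mp hn, List.mem_singleton] at hup
    exact h.ne hup.symm
  refine ⟨f, p, hp, degree_eq_one_iff_existsUnique_adj.mpr
    ⟨p.penultimate, (p.adj_penultimate hnil).symm, fun w hw => ?_⟩,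
    (hG.eq_snd_of_adj_start hp h hup).symm⟩
  refine hG.eq_penultimate_of_adj_end hp hw (by_contra fun hwp => ?_)
  have hmem : (p.concat hw).length ∈ S :=
    ⟨w, p.concat hw, hp.concat hwp hw, by simp [Walk.support_concat, hup], rfl⟩
  have := le_csSup hbdd hmem
  rw [Walk.length_concat] at this
  omega

end SimpleGraph.IsAcyclic

lemma collinearGrid_comm {p q r : ℤ × ℤ} : collinearGrid p q r ↔ collinearGrid r q p := by
  unfold collinearGrid; omega

namespace SModel

variable {V : Type*} {G : SimpleGraph V} (M : SModel G) {v a b c : V}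

lemma notMem_seg (ha : G.Adj v a) (hb : G.Adj v b) (hab : a ≠ b) :
    M.toFun a ∉ seg (M.toFun v) (M.toFun b) := by
  intro hmem
  have hseg : M.toFun a ∈ seg (M.toFun v) (M.toFun a) := ⟨Set.right_mem_uIcc, Set.right_mem_uIcc⟩
  have hne : s(v, a) ≠ s(v, b) := fun h => by
    rcases Sym2.eq_iff.mp h with ⟨-, h⟩ | ⟨-, h⟩
    exacts [hab h, ha.ne h.symm]
  obtain ⟨w, hw, hw', hwa⟩ := M.noCross ha hb hne _ ⟨hseg, hmem⟩
  obtain rfl := M.inj hwa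
  rcases hw' with rfl | rfl
  exacts [ha.ne rfl, hab rfl]

lemma bendAt_iff_not_collinearGrid (ha : G.Adj v a) (hc : G.Adj v c) :
    bendAt M.toFun a v c ↔ ¬ collinearGrid (M.toFun a) (M.toFun v) (M.toFun c) := by
  unfold bendAt collinearGrid
  rcases M.axisAligned ha with ⟨h1, h2⟩ | ⟨h1, h2⟩ <;>
    rcases M.axisAligned hc with ⟨h3, h4⟩ | ⟨h3, h4⟩ <;> omega

/-- Two neighbours on a common grid line through `v` lie on opposite sides of `v`, since no edge
segment may contain another neighbour. -/
lemma not_collinearGrid_of_collinearGrid (ha : G.Adj v a) (hb : G.Adj v b) (hc : G.Adj v c)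
    (hab : a ≠ b) (hca : c ≠ a) (hcb : c ≠ b)
    (hcol : collinearGrid (M.toFun a) (M.toFun v) (M.toFun b)) :
    ¬ collinearGrid (M.toFun a) (M.toFun v) (M.toFun c) := by
  intro hcol'
  have := M.notMem_seg ha hb hab
  have := M.notMem_seg hb ha hab.symm
  have := M.notMem_seg ha hc hca.symm
  have := M.notMem_seg hc ha hca
  have := M.notMem_seg hb hc hcb.symm
  have := M.notMem_seg hc hb hcb
  have := M.axisAligned ha
  have := M.axisAligned hb
  have := M.axisAligned hc
  simp only [seg, Set.mem_ofPred_eq, Set.mem_uIcc, collinearGrid] at *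
  omega

end SModel

lemma SimpleGraph.Walk.IsPath.bends_support_le_card {V : Type*} [Fintype V] {G : SimpleGraph V}
    (φ : V → ℤ × ℤ) {a b : V} {p : G.Walk a b} (hp : p.IsPath) :
    bends φ p.support ≤ Fintype.card V :=
  (bends_le_length φ _).trans hp.support_nodup.length_le_card

section LeafBend

variable {V : Type*} [Fintype V] {G : SimpleGraph V} [DecidableRel G.Adj] (M : SModel G)

lemma bddAbove_leafBend (p v : V) :
    BddAbove {n | ∃ (f : V) (W : G.Walk p f), W.IsPath ∧ G.degree f = 1 ∧ v ∈ W.support ∧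
      bends M.toFun W.support = n} :=
  ⟨Fintype.card V, by rintro _ ⟨f, W, hW, -, -, rfl⟩; exact hW.bends_support_le_card _⟩

lemma bddAbove_bendNumAt (v : V) :
    BddAbove {n | ∃ (a b : V) (W : G.Walk a b), W.IsPath ∧ G.degree a = 1 ∧ G.degree b = 1 ∧
      v ∈ W.support ∧ bends M.toFun W.support = n} :=
  ⟨Fintype.card V, by rintro _ ⟨a, b, W, hW, -, -, -, rfl⟩; exact hW.bends_support_le_card _⟩

lemma bends_le_leafBend {p v f : V} {W : G.Walk p f} (hW : W.IsPath) (hf : G.degree f = 1)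
    (hv : v ∈ W.support) : bends M.toFun W.support ≤ leafBend M p v :=
  le_csSup (bddAbove_leafBend M p v) ⟨f, W, hW, hf, hv, rfl⟩

lemma exists_bends_eq_leafBend (hG : G.IsAcyclic) {v u : V} (h : G.Adj v u) :
    ∃ (f : V) (W : G.Walk v f), W.IsPath ∧ G.degree f = 1 ∧ W.snd = u ∧
      bends M.toFun W.support = leafBend M v u := by
  obtain ⟨f, W, hW, hf, hWu⟩ := hG.exists_isPath_snd_eq_degree_eq_one h
  obtain ⟨f', W', hW', hf', hu, hb⟩ := Nat.sSup_mem
    (by exact ⟨_, f, W, hW, hf, hWu ▸ W.getVert_mem_support 1, rfl⟩) (bddAbove_leafBend M v u)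
  exact ⟨f', W', hW', hf', (hG.eq_snd_of_adj_start hW' h hu).symm, hb⟩

lemma exists_bends_eq_leafBend_add_leafBend (hG : G.IsAcyclic) {v x y : V} (hx : G.Adj v x)
    (hy : G.Adj v y) (hxy : x ≠ y) :
    ∃ (a b : V) (W : G.Walk a b), W.IsPath ∧ G.degree a = 1 ∧ G.degree b = 1 ∧
      v ∈ W.support ∧ bends M.toFun W.support =
        leafBend M v x + leafBend M v y + if bendAt M.toFun x v y then 1 else 0 := by
  obtain ⟨a, P, hP, ha, rfl, hPb⟩ := exists_bends_eq_leafBend M hG hx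
  obtain ⟨b, Q, hQ, hb, rfl, hQb⟩ := exists_bends_eq_leafBend M hG hy
  have hPn : ¬ P.Nil := by rintro ⟨⟩; exact hx.ne rfl
  have hQn : ¬ Q.Nil := by rintro ⟨⟩; exact hy.ne rfl
  refine ⟨a, b, P.reverse.append Q, hG.isPath_reverse_append hP hQ hxy, ha, hb, by simp, ?_⟩
  rw [bends_support_reverse_append _ P Q hPn hQn, hPb, hQb]

lemma leafBend_add_leafBend_le_bendNumAt (hG : G.IsAcyclic) {v x y : V} (hx : G.Adj v x)
    (hy : G.Adj v y) (hxy : x ≠ y) :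
    leafBend M v x + leafBend M v y + (if bendAt M.toFun x v y then 1 else 0) ≤
      bendNumAt M v :=
  le_csSup (bddAbove_bendNumAt M v) (exists_bends_eq_leafBend_add_leafBend M hG hx hy hxy)

lemma exists_bendNumAt_le (hG : G.IsAcyclic) {v x y : V} (hx : G.Adj v x) (hy : G.Adj v y)
    (hxy : x ≠ y) :
    ∃ x y, G.Adj v x ∧ G.Adj v y ∧ x ≠ y ∧
      bendNumAt M v ≤ leafBend M v x + leafBend M v y +
        if bendAt M.toFun x v y then 1 else 0 := by
  classical
  obtain ⟨a, b, W, hW, ha, hb, hv, hWb⟩ := Nat.sSup_mem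
    ⟨_, exists_bends_eq_leafBend_add_leafBend M hG hx hy hxy⟩ (bddAbove_bendNumAt M v)
  have not_leaf : G.degree v ≠ 1 := fun h =>
    hxy ((degree_eq_one_iff_existsUnique_adj.mp h).unique hx hy)
  set P := (W.takeUntil v hv).reverse
  set Q := W.dropUntil v hv
  have hPn : ¬ P.Nil := Walk.not_nil_of_ne fun h => not_leaf (h ▸ ha)
  have hQn : ¬ Q.Nil := Walk.not_nil_of_ne fun h => not_leaf (h ▸ hb)
  have hWPQ : W = P.reverse.append Q := by simp [P, Q, W.take_spec hv]
  have hnodup := hW.support_nodup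
  rw [hWPQ, Walk.support_append, Walk.support_reverse, List.nodup_append] at hnodup
  refine ⟨P.snd, Q.snd, P.adj_snd hPn, Q.adj_snd hQn,
    hnodup.2.2 _ (List.mem_reverse.mpr (P.getVert_mem_support 1)) _
      (Q.snd_mem_tail_support hQn), ?_⟩
  rw [show bendNumAt M v = bends M.toFun W.support from hWb.symm, hWPQ,
    bends_support_reverse_append _ P Q hPn hQn]
  gcongr
  · exact bends_le_leafBend M ((hW.takeUntil hv).reverse) ha (P.getVert_mem_support 1)
  · exact bends_le_leafBend M (hW.dropUntil hv) hb (Q.getVert_mem_support 1)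

end LeafBend

/-- `a` and `b` carry the two largest values of `f` on `S` (the paper's `b^1`, `b^2`, in either
order). -/
def IsTopPair {α β : Type*} [LinearOrder β] (S : Set α) (f : α → β) (a b : α) : Prop :=
  a ∈ S ∧ b ∈ S ∧ a ≠ b ∧ ∀ w ∈ S, w ≠ a → w ≠ b → f w ≤ min (f a) (f b)

namespace IsTopPair

variable {α β : Type*} [LinearOrder β] {S : Set α} {f : α → β} {a b c d x : α}

lemma le_max (h : IsTopPair S f a b) (hx : x ∈ S) : f x ≤ max (f a) (f b) := by
  by_cases hxa : x = a
  · exact hxa ▸ le_max_left _ _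
  by_cases hxb : x = b
  · exact hxb ▸ le_max_right _ _
  exact (h.2.2.2 x hx hxa hxb).trans min_le_max

lemma min_le (h : IsTopPair S f a b) (hc : c ∈ S) (hd : d ∈ S) (hcd : c ≠ d) :
    min (f c) (f d) ≤ min (f a) (f b) := by
  by_cases hc' : c ≠ a ∧ c ≠ b
  · exact (min_le_left _ _).trans (h.2.2.2 c hc hc'.1 hc'.2)
  by_cases hd' : d ≠ a ∧ d ≠ b
  · exact (min_le_right _ _).trans (h.2.2.2 d hd hd'.1 hd'.2)
  have : (c = a ∧ d = b) ∨ (c = b ∧ d = a) := by grind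
  rcases this with ⟨rfl, rfl⟩ | ⟨rfl, rfl⟩
  exacts [le_rfl, (min_comm _ _).le]

lemma max_eq (h : IsTopPair S f a b) (h' : IsTopPair S f c d) :
    max (f a) (f b) = max (f c) (f d) :=
  le_antisymm (max_le (h'.le_max h.1) (h'.le_max h.2.1)) (max_le (h.le_max h'.1) (h.le_max h'.2.1))

lemma add_le [AddCommMonoid β] [IsOrderedAddMonoid β] (h : IsTopPair S f a b) (hc : c ∈ S)
    (hd : d ∈ S) (hcd : c ≠ d) : f c + f d ≤ f a + f b := by
  rw [← min_add_max (f c), ← min_add_max (f a)]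
  exact add_le_add (h.min_le hc hd hcd) (max_le (h.le_max hc) (h.le_max hd))

/-- If `x ∈ {c, d}` lies outside the top pair, some member of the top pair lies outside
`{c, d}`, and it dominates `x`. -/
lemma le_of_ne_of_ne {t : β} (h : IsTopPair S f a b) (ht : ∀ w ∈ S, w ≠ c → w ≠ d → f w ≤ t)
    (hx : x ∈ S) (hxa : x ≠ a) (hxb : x ≠ b) : f x ≤ t := by
  by_cases hx' : x ≠ c ∧ x ≠ d
  · exact ht x hx hx'.1 hx'.2
  have hz : ∃ z ∈ S, (z = a ∨ z = b) ∧ z ≠ c ∧ z ≠ d := by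
    by_cases ha : a ≠ c ∧ a ≠ d
    · exact ⟨a, h.1, .inl rfl, ha⟩
    by_cases hb : b ≠ c ∧ b ≠ d
    · exact ⟨b, h.2.1, .inr rfl, hb⟩
    grind [h.2.2.1]
  obtain ⟨z, hzS, hz, hzc, hzd⟩ := hz
  calc f x ≤ min (f a) (f b) := h.2.2.2 x hx hxa hxb
    _ ≤ f z := by rcases hz with rfl | rfl; exacts [min_le_left _ _, min_le_right _ _]
    _ ≤ t := ht z hzS hzc hzd

end IsTopPair

lemma exists_ne_ne_of_pairwise_ne {α : Type*} {x y z : α} (a b : α) (hxy : x ≠ y) (hxz : x ≠ z)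
    (hyz : y ≠ z) : ∃ w, (w = x ∨ w = y ∨ w = z) ∧ w ≠ a ∧ w ≠ b := by
  classical
  have hcard : ({a, b} : Finset α).card < ({x, y, z} : Finset α).card := by
    rw [Finset.card_eq_three.mpr ⟨x, y, z, hxy, hxz, hyz, rfl⟩]
    exact Finset.card_le_two.trans_lt (by norm_num)
  obtain ⟨w, hw, hwab⟩ := Finset.exists_mem_notMem_of_card_lt_card hcard
  simp only [Finset.mem_insert, Finset.mem_singleton, not_or] at hw hwab
  exact ⟨w, hw, hwab⟩

lemma SimpleGraph.eq_or_eq_of_degree_eq_two {V : Type*} [Fintype V] {G : SimpleGraph V}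
    [DecidableRel G.Adj] {v a b w : V} (hdeg : G.degree v = 2) (ha : G.Adj v a) (hb : G.Adj v b)
    (hab : a ≠ b) (hw : G.Adj v w) : w = a ∨ w = b := by
  classical
  have hnbr : {a, b} = G.neighborFinset v := Finset.eq_of_subset_of_card_le
    (by simp [Finset.insert_subset_iff, ha, hb]) (by rw [card_neighborFinset_eq_degree, hdeg,
      Finset.card_pair hab])
  simpa [← hnbr] using (G.mem_neighborFinset v w).mpr hw

section Balanced

variable {V : Type*} [Fintype V] {G : SimpleGraph V} [DecidableRel G.Adj] (M : SModel G)

lemma leafBend_add_leafBend_le_bendNumAt_of_collinearGrid (hG : G.IsAcyclic) {v a b : V}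
    (ha : G.Adj v a) (hb : G.Adj v b) (hab : a ≠ b)
    (hcol : collinearGrid (M.toFun a) (M.toFun v) (M.toFun b)) :
    leafBend M v a + leafBend M v b ≤ bendNumAt M v := by
  simpa [(M.bendAt_iff_not_collinearGrid ha hb).not_left.mpr hcol] using
    leafBend_add_leafBend_le_bendNumAt M hG ha hb hab

/-- A bending leaf-to-leaf path through `v` leaves `v` through a neighbour outside `{a, b}`. -/
lemma bendNumAt_le_of_isTopPair (hG : G.IsAcyclic) {v a b : V} {t : ℤ}
    (hab : IsTopPair (G.neighborSet v) (fun w => (leafBend M v w : ℤ)) a b)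
    (hcol : collinearGrid (M.toFun a) (M.toFun v) (M.toFun b))
    (ht : ∀ w ∈ G.neighborSet v, w ≠ a → w ≠ b → (leafBend M v w : ℤ) ≤ t) :
    (bendNumAt M v : ℤ) ≤ max ((leafBend M v a : ℤ) + leafBend M v b)
      (max (leafBend M v a : ℤ) (leafBend M v b) + t + 1) := by
  obtain ⟨x, y, hx, hy, hxy, hle⟩ := exists_bendNumAt_le M hG hab.1 hab.2.1 hab.2.2.1
  zify at hle
  split_ifs at hle with hbend
  · refine le_max_of_le_right ?_
    rw [M.bendAt_iff_not_collinearGrid hx hy] at hbend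
    have hcol' := collinearGrid_comm.mp hcol
    have : (x ≠ a ∧ x ≠ b) ∨ (y ≠ a ∧ y ≠ b) := by grind
    rcases this with ⟨hxa, hxb⟩ | ⟨hya, hyb⟩
    · linarith [ht x hx hxa hxb, hab.le_max hy]
    · linarith [ht y hy hya hyb, hab.le_max hx]
  · exact le_max_of_le_left (by linarith [hab.add_le hx hy hxy])

/-- One of `x, y, z` lies off the line of `a, v, b`, so a path from the larger of `a`, `b`
through `v` to it bends at `v`. -/
lemma max_add_add_one_le_bendNumAt (hG : G.IsAcyclic) {v a b x y z : V} {t : ℕ}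
    (ha : G.Adj v a) (hb : G.Adj v b) (hab : a ≠ b)
    (hcol : collinearGrid (M.toFun a) (M.toFun v) (M.toFun b))
    (hx : G.Adj v x) (hy : G.Adj v y) (hz : G.Adj v z) (hxy : x ≠ y) (hxz : x ≠ z) (hyz : y ≠ z)
    (htx : t ≤ leafBend M v x) (hty : t ≤ leafBend M v y) (htz : t ≤ leafBend M v z) :
    max (leafBend M v a) (leafBend M v b) + t + 1 ≤ bendNumAt M v := by
  obtain ⟨w, hw, hwa, hwb⟩ := exists_ne_ne_of_pairwise_ne a b hxy hxz hyz
  obtain ⟨hw, htw⟩ : G.Adj v w ∧ t ≤ leafBend M v w := by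
    rcases hw with rfl | rfl | rfl <;> exact ⟨‹_›, ‹_›⟩
  have key : ∀ c d, G.Adj v c → G.Adj v d → c ≠ d → w ≠ c → w ≠ d →
      collinearGrid (M.toFun c) (M.toFun v) (M.toFun d) →
      leafBend M v c + t + 1 ≤ bendNumAt M v := by
    intro c d hc hd hcd hwc hwd hcol
    have hbend := (M.bendAt_iff_not_collinearGrid hc hw).mpr
      (M.not_collinearGrid_of_collinearGrid hc hd hw hcd hwc hwd hcol)
    have := leafBend_add_leafBend_le_bendNumAt M hG hc hw (Ne.symm hwc)
    rw [if_pos hbend] at this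
    omega
  rcases le_total (leafBend M v a) (leafBend M v b) with h | h
  · rw [max_eq_right h]
    exact key b a hb ha hab.symm hwb hwa (collinearGrid_comm.mp hcol)
  · rw [max_eq_left h]
    exact key a b ha hb hab hwa hwb hcol

end Balanced

theorem stmt_7_general {V : Type*} [Fintype V] (G : SimpleGraph V) [DecidableRel G.Adj]
    (hT : G.IsTree) (M : SModel G)
    (v u1 u2 : V) (b3 : ℤ) (hdeg2 : 2 ≤ G.degree v) (hbal : BalancedAt M v)
    (h1 : G.Adj v u1) (h2 : G.Adj v u2) (h12 : u1 ≠ u2)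
    (h21 : leafBend M v u2 ≤ leafBend M v u1)
    (htop : ∀ w, G.Adj v w → w ≠ u1 → w ≠ u2 → leafBend M v w ≤ leafBend M v u2)
    (hb3 : (∃ u3 : V, G.Adj v u3 ∧ u3 ≠ u1 ∧ u3 ≠ u2 ∧
        leafBend M v u3 ≤ leafBend M v u2 ∧
        (∀ w, G.Adj v w → w ≠ u1 → w ≠ u2 → w ≠ u3 →
          leafBend M v w ≤ leafBend M v u3) ∧
        b3 = (leafBend M v u3 : ℤ)) ∨ (G.degree v = 2 ∧ b3 = -1)) :
    (bendNumAt M v : ℤ) =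
      max ((leafBend M v u1 : ℤ) + (leafBend M v u2 : ℤ))
        ((leafBend M v u1 : ℤ) + b3 + 1) := by
  obtain hv | ⟨a, b, hab, ha, hb, hcol, hmin⟩ := hbal
  · omega
  have hG := hT.isAcyclic
  have hpair : IsTopPair (G.neighborSet v) (fun w => (leafBend M v w : ℤ)) a b :=
    ⟨ha, hb, hab, fun w hw hwa hwb => by simpa using hmin w hw hwa hwb⟩
  have htop' : IsTopPair (G.neighborSet v) (fun w => (leafBend M v w : ℤ)) u1 u2 :=
    ⟨h1, h2, h12, fun w hw hw1 hw2 => by simpa [h21] using htop w hw hw1 hw2⟩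
  have hthird : ∀ w ∈ G.neighborSet v, w ≠ u1 → w ≠ u2 → (leafBend M v w : ℤ) ≤ b3 := by
    rcases hb3 with ⟨u3, -, -, -, -, h3, rfl⟩ | ⟨hdeg, -⟩ <;> intro w hw hw1 hw2
    · obtain rfl | hw3 := eq_or_ne w u3
      · exact le_rfl
      · exact_mod_cast h3 w hw hw1 hw2 hw3
    · exact absurd (G.eq_or_eq_of_degree_eq_two hdeg h1 h2 h12 hw) (by tauto)
  have hmax : max (leafBend M v a : ℤ) (leafBend M v b) = leafBend M v u1 :=
    (hpair.max_eq htop').trans (max_eq_left (by exact_mod_cast h21))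
  have hsum : (leafBend M v a : ℤ) + leafBend M v b = leafBend M v u1 + leafBend M v u2 :=
    le_antisymm (htop'.add_le ha hb hab) (hpair.add_le h1 h2 h12)
  have hstraight : (leafBend M v u1 : ℤ) + leafBend M v u2 ≤ bendNumAt M v := by
    rw [← hsum]
    exact_mod_cast leafBend_add_leafBend_le_bendNumAt_of_collinearGrid M hG ha hb hab hcol
  refine le_antisymm ?_ (max_le hstraight ?_)
  · have := bendNumAt_le_of_isTopPair M hG hpair hcol
      fun w hw hwa hwb => hpair.le_of_ne_of_ne hthird hw hwa hwb
    rwa [hsum, hmax] at this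
  · rcases hb3 with ⟨u3, h3, h31, h32, h32le, -, rfl⟩ | ⟨-, rfl⟩
    · have := max_add_add_one_le_bendNumAt M hG ha hb hab hcol h1 h2 h3 h12 h31.symm h32.symm
        (h32le.trans h21) h32le le_rfl
      zify at this
      linarith
    · linarith [show (0 : ℤ) ≤ leafBend M v u2 from Nat.cast_nonneg _]

theorem stmt_7 {V : Type*} [Fintype V] (G : SimpleGraph V) [DecidableRel G.Adj]
    (hT : G.IsTree) (hdeg : ∀ v, G.degree v ≤ 4) (M : SModel G)
    (v u1 u2 : V) (b3 : ℤ) (hdeg2 : 2 ≤ G.degree v) (hbal : BalancedAt M v)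
    (h1 : G.Adj v u1) (h2 : G.Adj v u2) (h12 : u1 ≠ u2)
    (h21 : leafBend M v u2 ≤ leafBend M v u1)
    (htop : ∀ w, G.Adj v w → w ≠ u1 → w ≠ u2 → leafBend M v w ≤ leafBend M v u2)
    (hb3 : (∃ u3 : V, G.Adj v u3 ∧ u3 ≠ u1 ∧ u3 ≠ u2 ∧
        leafBend M v u3 ≤ leafBend M v u2 ∧
        (∀ w, G.Adj v w → w ≠ u1 → w ≠ u2 → w ≠ u3 →
          leafBend M v w ≤ leafBend M v u3) ∧
        b3 = (leafBend M v u3 : ℤ)) ∨ (G.degree v = 2 ∧ b3 = -1)) :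
    (bendNumAt M v : ℤ) =
      max ((leafBend M v u1 : ℤ) + (leafBend M v u2 : ℤ))
        ((leafBend M v u1 : ℤ) + b3 + 1) :=
  stmt_7_general G hT M v u1 u2 b3 hdeg2 hbal h1 h2 h12 h21 htop hb3
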